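/- Let n ≥ 1, R > 0, c > 0 and 3 ≤ a ≤ min{n-c+2, n-3c}. Then for every complex-valued function f ∈ C_0^∞(B(0,R)\{0}) one has (3c²/4)² · ∫_{B(0,R)} |f(x)|² / (|x|^a (1-(|x|/R)^c)⁴) dx ≤ ∫_{B(0,R)} |𝓡²f(x) + ((n-1)/|x|)·𝓡f(x)|² / |x|^{a-4} dx. -/

import Mathlib

open MeasureTheory Metric

/-- The radial derivative `𝓡f(x) = Df(x)[x/|x|]` of a complex-valued function on `ℝⁿ`. -/
noncomputable def radDeriv {n : ℕ} (f : EuclideanSpace ℝ (Fin n) → ℂ)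
    (x : EuclideanSpace ℝ (Fin n)) : ℂ :=
  fderiv ℝ f x (‖x‖⁻¹ • x)

open Set Filter Topology

section AuxLemmas

variable {E' : Type*} [NormedAddCommGroup E'] [NormedSpace ℝ E']
  {X : Type*} [NormedAddCommGroup X] [NormedSpace ℝ X]

lemma contDiff_glob {F : E' → X} {U K : Set E'}
    (hU : IsOpen U) (hKc : IsClosed K) (hKU : K ⊆ U)
    (hF : ContDiffOn ℝ (⊤ : ℕ∞) F U) (h0 : ∀ x ∉ K, F x = 0) : ContDiff ℝ (⊤ : ℕ∞) F := by
  rw [contDiff_iff_contDiffAt]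
  intro x
  by_cases hx : x ∈ U
  · exact hF.contDiffAt (hU.mem_nhds hx)
  · have hxK : x ∉ K := fun h => hx (hKU h)
    have hev : F =ᶠ[𝓝 x] (fun _ => 0) :=
      eventually_of_mem (hKc.isOpen_compl.mem_nhds hxK) (fun y hy => h0 y hy)
    exact (contDiffAt_const (c := (0 : X))).congr_of_eventuallyEq hev

lemma continuous_glob {F : E' → X} {U K : Set E'}
    (hU : IsOpen U) (hKc : IsClosed K) (hKU : K ⊆ U)
    (hF : ContinuousOn F U) (h0 : ∀ x ∉ K, F x = 0) : Continuous F := by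
  rw [continuous_iff_continuousAt]
  intro x
  by_cases hx : x ∈ U
  · exact hF.continuousAt (hU.mem_nhds hx)
  · have hxK : x ∉ K := fun h => hx (hKU h)
    have hev : F =ᶠ[𝓝 x] (fun _ => 0) :=
      eventually_of_mem (hKc.isOpen_compl.mem_nhds hxK) (fun y hy => h0 y hy)
    exact ContinuousAt.congr (continuousAt_const (y := (0:X))) hev.symm

lemma fderiv_zero_of_nmem {F : E' → X} {K : Set E'} (hKc : IsClosed K)
    {x : E'} (hx : x ∉ K) (h0 : ∀ y ∉ K, F y = 0) : fderiv ℝ F x = 0 := by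
  have hev : F =ᶠ[𝓝 x] (fun _ => 0) :=
    eventually_of_mem (hKc.isOpen_compl.mem_nhds hx) (fun y hy => h0 y hy)
  rw [hev.fderiv_eq]
  exact fderiv_const_apply 0

lemma contDiff_normsq (φ : E' → ℂ) (hφ : ContDiff ℝ (⊤ : ℕ∞) φ) :
    ContDiff ℝ (⊤ : ℕ∞) (fun y => ‖φ y‖ ^ 2) := by
  have heq : (fun y => ‖φ y‖ ^ 2) = fun y => (φ y).re * (φ y).re + (φ y).im * (φ y).im := by
    funext y
    rw [Complex.sq_norm, Complex.normSq_apply]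
  rw [heq]
  have hre : ContDiff ℝ (⊤ : ℕ∞) (fun y => (φ y).re) := Complex.reCLM.contDiff.comp hφ
  have him : ContDiff ℝ (⊤ : ℕ∞) (fun y => (φ y).im) := Complex.imCLM.contDiff.comp hφ
  exact (hre.mul hre).add (him.mul him)

end AuxLemmas

lemma expand_sq (z w : ℂ) (h ρ : ℝ) :
    ‖z + (h : ℂ) * w‖ ^ 2 * ρ =
      ‖z‖ ^ 2 * ρ + (2 * (((starRingEnd ℂ) w) * z).re) * (h * ρ) + ‖w‖ ^ 2 * (h ^ 2 * ρ) := by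
  rw [Complex.sq_norm, Complex.sq_norm, Complex.sq_norm]
  simp only [Complex.normSq_apply, Complex.add_re, Complex.add_im, Complex.mul_re,
    Complex.mul_im, Complex.ofReal_re, Complex.ofReal_im, Complex.conj_re, Complex.conj_im]
  ring

lemma fderiv_normsq_apply {n : ℕ} (φ : EuclideanSpace ℝ (Fin n) → ℂ)
    (hφ : ContDiff ℝ (⊤ : ℕ∞) φ) (x v : EuclideanSpace ℝ (Fin n)) :
    fderiv ℝ (fun y => ‖φ y‖ ^ 2) x v =
      2 * (((starRingEnd ℂ) (φ x)) * (fderiv ℝ φ x v)).re := by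
  have hd : HasFDerivAt φ (fderiv ℝ φ x) x := (hφ.differentiable (by simp) x).hasFDerivAt
  set G := fderiv ℝ φ x with hG
  have hre : HasFDerivAt (fun y => (φ y).re) (Complex.reCLM.comp G) x :=
    (Complex.reCLM.hasFDerivAt).comp x hd
  have him : HasFDerivAt (fun y => (φ y).im) (Complex.imCLM.comp G) x :=
    (Complex.imCLM.hasFDerivAt).comp x hd
  have heq : (fun y => ‖φ y‖ ^ 2) = fun y => (φ y).re * (φ y).re + (φ y).im * (φ y).im := by
    funext y
    rw [Complex.sq_norm, Complex.normSq_apply]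
  rw [heq]
  have h2 : fderiv ℝ (fun y => (φ y).re * (φ y).re + (φ y).im * (φ y).im) x = _ :=
    ((hre.mul hre).add (him.mul him)).fderiv
  rw [h2]
  simp only [ContinuousLinearMap.add_apply, ContinuousLinearMap.smul_apply,
    ContinuousLinearMap.coe_comp', Function.comp_apply, Complex.reCLM_apply, Complex.imCLM_apply,
    smul_eq_mul, Complex.mul_re, Complex.conj_re, Complex.conj_im]
  ring

lemma integrable_glob {n : ℕ} {F : EuclideanSpace ℝ (Fin n) → ℝ}
    {K : Set (EuclideanSpace ℝ (Fin n))}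
    (hK : IsCompact K) (hF : Continuous F) (h0 : ∀ x ∉ K, F x = 0) :
    Integrable F := hF.integrable_of_hasCompactSupport (HasCompactSupport.intro hK h0)

lemma integral_fderiv_apply_eq_zero {n : ℕ} {F : EuclideanSpace ℝ (Fin n) → ℝ}
    {K : Set (EuclideanSpace ℝ (Fin n))} (hK : IsCompact K) (hKc : IsClosed K)
    (hF : ContDiff ℝ (⊤ : ℕ∞) F) (h0 : ∀ x ∉ K, F x = 0) (v : EuclideanSpace ℝ (Fin n)) :
    ∫ x, fderiv ℝ F x v = 0 := by
  have hFint : Integrable F := integrable_glob hK hF.continuous h0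
  have hF'cont : Continuous (fun x => fderiv ℝ F x v) :=
    (hF.continuous_fderiv (by simp)).clm_apply continuous_const
  have hF'int : Integrable (fun x => fderiv ℝ F x v) := by
    refine integrable_glob hK hF'cont (fun x hx => ?_)
    rw [fderiv_zero_of_nmem hKc hx h0]; rfl
  have h := integral_mul_fderiv_eq_neg_fderiv_mul_of_integrable (μ := volume)
    (f := F) (g := fun _ => (1:ℝ)) (v := v) ?_ ?_ ?_ (fun x _ => hF.differentiable (by simp) x)
    (fun x _ => differentiableAt_const (1:ℝ))
  · have hz : ∀ x : EuclideanSpace ℝ (Fin n), fderiv ℝ (fun _ => (1:ℝ)) x v = 0 := by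
      intro x; rw [fderiv_const_apply]; rfl
    simp only [hz, mul_zero, mul_one, integral_zero] at h
    linarith [h]
  · simpa using hF'int
  · have hz : ∀ x : EuclideanSpace ℝ (Fin n), fderiv ℝ (fun _ => (1:ℝ)) x v = 0 := by
      intro x; rw [fderiv_const_apply]; rfl
    simp only [hz, mul_zero]
    exact integrable_zero _ _ _
  · simpa using hFint

set_option maxHeartbeats 1000000 in
/-- Key radial integration by parts. -/
lemma radial_ibp {n : ℕ} {R : ℝ} (hR : 0 < R) {K : Set (EuclideanSpace ℝ (Fin n))}
    (hK : IsCompact K) (hKc : IsClosed K)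
    (hKU : K ⊆ ball (0 : EuclideanSpace ℝ (Fin n)) R \ {0})
    {w : EuclideanSpace ℝ (Fin n) → ℝ} (hw : ContDiff ℝ (⊤ : ℕ∞) w) (h0 : ∀ x ∉ K, w x = 0)
    {ψ dψ : ℝ → ℝ} (hψd : ∀ r ∈ Set.Ioo (0:ℝ) R, HasDerivAt ψ (dψ r) r)
    (hψc : ContDiffOn ℝ (⊤ : ℕ∞) ψ (Set.Ioo 0 R)) (hdψc : ContinuousOn dψ (Set.Ioo 0 R)) :
    ∫ x, fderiv ℝ w x (‖x‖⁻¹ • x) * ψ ‖x‖ =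
      - ∫ x, w x * (dψ ‖x‖ + ((n : ℝ) - 1) / ‖x‖ * ψ ‖x‖) := by
  classical
  set U : Set (EuclideanSpace ℝ (Fin n)) := ball 0 R \ {0} with hUdef
  have hU : IsOpen U := isOpen_ball.sdiff isClosed_singleton
  have hmemU : ∀ x ∈ U, 0 < ‖x‖ ∧ ‖x‖ < R := by
    intro x hx
    exact ⟨norm_pos_iff.2 (fun h => hx.2 (by simp [h])), mem_ball_zero_iff.1 hx.1⟩
  have hrIoo : ∀ x ∈ U, ‖x‖ ∈ Set.Ioo (0:ℝ) R := fun x hx => ⟨(hmemU x hx).1, (hmemU x hx).2⟩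
  have hnormOn : ContDiffOn ℝ (⊤ : ℕ∞) (fun x : EuclideanSpace ℝ (Fin n) => ‖x‖) U := by
    intro x hx
    have hx0 : x ≠ 0 := fun h => hx.2 (by simp [h])
    exact (contDiffAt_norm (𝕜 := ℝ) hx0).contDiffWithinAt
  have hnormne : ∀ x ∈ U, ‖x‖ ≠ 0 := fun x hx => (hmemU x hx).1.ne'
  set u : EuclideanSpace ℝ (Fin n) → ℝ := fun x => w x * (ψ ‖x‖ / ‖x‖) with hudef
  have hu0 : ∀ x ∉ K, u x = 0 := fun x hx => by simp [hudef, h0 x hx]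
  have hucd : ContDiff ℝ (⊤ : ℕ∞) u := by
    refine contDiff_glob hU hKc hKU ?_ hu0
    exact hw.contDiffOn.mul ((hψc.comp hnormOn hrIoo).div hnormOn hnormne)
  set e : Fin n → EuclideanSpace ℝ (Fin n) := fun i => EuclideanSpace.single i 1 with hedef
  set F : Fin n → EuclideanSpace ℝ (Fin n) → ℝ := fun i y => u y * y i with hFdef
  have hFcd : ∀ i, ContDiff ℝ (⊤ : ℕ∞) (F i) := by
    intro i
    exact hucd.mul (EuclideanSpace.proj i : EuclideanSpace ℝ (Fin n) →L[ℝ] ℝ).contDiff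
  have hF0 : ∀ i, ∀ x ∉ K, F i x = 0 := fun i x hx => by simp [hFdef, hu0 x hx]
  have hF'int : ∀ i, Integrable (fun x => fderiv ℝ (F i) x (e i)) := by
    intro i
    refine integrable_glob hK (((hFcd i).continuous_fderiv (by simp)).clm_apply continuous_const)
      (fun x hx => ?_)
    rw [fderiv_zero_of_nmem hKc hx (hF0 i)]; rfl
  have hIBP : ∀ i, ∫ x, fderiv ℝ (F i) x (e i) = 0 := fun i =>
    integral_fderiv_apply_eq_zero hK hKc (hFcd i) (hF0 i) (e i)
  have hdiv : ∀ x, (∑ i, fderiv ℝ (F i) x (e i)) =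
      fderiv ℝ w x (‖x‖⁻¹ • x) * ψ ‖x‖ + w x * (dψ ‖x‖ + ((n : ℝ) - 1) / ‖x‖ * ψ ‖x‖) := by
    intro x
    by_cases hx : x ∈ U
    · obtain ⟨hr0, hrR⟩ := hmemU x hx
      have hx0 : x ≠ 0 := fun h => by simp [h] at hr0
      set r : ℝ := ‖x‖ with hrdef
      have hdnorm : DifferentiableAt ℝ (fun y : EuclideanSpace ℝ (Fin n) => ‖y‖) x :=
        ((contDiffAt_norm (𝕜 := ℝ) hx0 : ContDiffAt ℝ 1 (fun y : EuclideanSpace ℝ (Fin n) => ‖y‖) x).differentiableAt one_ne_zero)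
      set N : EuclideanSpace ℝ (Fin n) →L[ℝ] ℝ := fderiv ℝ (fun y => ‖y‖) x with hNdef
      have hNx : N x = ‖x‖ := hdnorm.fderiv_norm_self
      have hNorm : HasFDerivAt (fun y : EuclideanSpace ℝ (Fin n) => ‖y‖) N x :=
        hdnorm.hasFDerivAt
      have hψr : HasDerivAt ψ (dψ r) r := hψd r ⟨hr0, hrR⟩
      have hq : HasDerivAt (fun ρ : ℝ => ψ ρ / ρ) ((dψ r * r - ψ r * 1) / r ^ 2) r :=
        hψr.div (hasDerivAt_id r) hr0.ne'
      have hqn : HasFDerivAt (fun y : EuclideanSpace ℝ (Fin n) => ψ ‖y‖ / ‖y‖)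
          (((dψ r * r - ψ r * 1) / r ^ 2) • N) x := HasDerivAt.comp_hasFDerivAt (h₂ := fun ρ : ℝ => ψ ρ / ρ) x hq hNorm
      have hwd : HasFDerivAt w (fderiv ℝ w x) x := (hw.differentiable (by simp) x).hasFDerivAt
      set Dw : EuclideanSpace ℝ (Fin n) →L[ℝ] ℝ := fderiv ℝ w x with hDwdef
      have hud : HasFDerivAt u
          (w x • (((dψ r * r - ψ r * 1) / r ^ 2) • N) + (ψ r / r) • Dw) x := hwd.mul hqn
      set Du : EuclideanSpace ℝ (Fin n) →L[ℝ] ℝ :=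
        w x • (((dψ r * r - ψ r * 1) / r ^ 2) • N) + (ψ r / r) • Dw with hDudef
      have hproj : ∀ i, HasFDerivAt (fun y : EuclideanSpace ℝ (Fin n) => y i)
          (EuclideanSpace.proj i : EuclideanSpace ℝ (Fin n) →L[ℝ] ℝ) x := fun i =>
        (EuclideanSpace.proj i :
          EuclideanSpace ℝ (Fin n) →L[ℝ] ℝ).hasFDerivAt
      have hFd : ∀ i, HasFDerivAt (F i)
          (u x • (EuclideanSpace.proj i : EuclideanSpace ℝ (Fin n) →L[ℝ] ℝ) + (x i) • Du) x := by
        intro i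
        exact hud.mul (hproj i)
      have hFd' : ∀ i, fderiv ℝ (F i) x (e i) = u x + (x i) * Du (e i) := by
        intro i
        rw [(hFd i).fderiv]
        simp [hedef, EuclideanSpace.single_apply]
      rw [Finset.sum_congr rfl (fun i _ => hFd' i)]
      have hsb : ∑ i, (x i) • e i = x := by
        have h := (EuclideanSpace.basisFun (Fin n) ℝ).sum_repr x
        simpa [hedef, EuclideanSpace.basisFun_repr, EuclideanSpace.basisFun_apply] using h
      have hsum2 : ∑ i, (x i) * Du (e i) = Du x := by
        have h1 : ∀ i : Fin n, (x i) * Du (e i) = Du ((x i) • e i) := by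
          intro i
          rw [Du.map_smul, smul_eq_mul]
        rw [Finset.sum_congr rfl (fun i _ => h1 i), ← map_sum Du _ Finset.univ, hsb]
      rw [Finset.sum_add_distrib, hsum2, Finset.sum_const, Finset.card_univ, Fintype.card_fin]
      have hDux : Du x = w x * ((dψ r * r - ψ r * 1) / r ^ 2 * r) + (ψ r / r) * (Dw x) := by
        simp [hDudef, hNx, hrdef]
      have hDwx : Dw x = r * (Dw (r⁻¹ • x)) := by
        rw [Dw.map_smul, smul_eq_mul]
        field_simp
      have hRw : fderiv ℝ w x (‖x‖⁻¹ • x) = Dw (r⁻¹ • x) := rfl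
      rw [hDux, hDwx, hRw]
      simp only [hudef, nsmul_eq_mul]
      field_simp
      ring
    · have hxK : x ∉ K := fun h => hx (hKU h)
      have hw0 : w x = 0 := h0 x hxK
      have hfw : fderiv ℝ w x = 0 := fderiv_zero_of_nmem hKc hxK h0
      have hFz : ∀ i, fderiv ℝ (F i) x = 0 := fun i => fderiv_zero_of_nmem hKc hxK (hF0 i)
      simp [hFz, hfw, hw0]
  have hC1 : Integrable (fun x => fderiv ℝ w x (‖x‖⁻¹ • x) * ψ ‖x‖) := by
    refine integrable_glob hK (continuous_glob hU hKc hKU ?_ ?_) ?_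
    · apply ContinuousOn.mul
      · exact ((hw.continuous_fderiv (by simp)).continuousOn).clm_apply
          (((continuous_norm.continuousOn).inv₀ hnormne).smul continuous_id.continuousOn)
      · exact (hψc.continuousOn).comp continuous_norm.continuousOn hrIoo
    · intro x hx
      rw [fderiv_zero_of_nmem hKc hx h0]
      simp
    · intro x hx
      rw [fderiv_zero_of_nmem hKc hx h0]
      simp
  have hC2 : Integrable (fun x => w x * (dψ ‖x‖ + ((n : ℝ) - 1) / ‖x‖ * ψ ‖x‖)) := by
    refine integrable_glob hK (continuous_glob hU hKc hKU ?_ ?_) ?_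
    · apply ContinuousOn.mul hw.continuous.continuousOn
      apply ContinuousOn.add
      · exact hdψc.comp continuous_norm.continuousOn hrIoo
      · exact (continuousOn_const.div continuous_norm.continuousOn hnormne).mul
          ((hψc.continuousOn).comp continuous_norm.continuousOn hrIoo)
    · intro x hx; simp [h0 x hx]
    · intro x hx; simp [h0 x hx]
  have hz : ∫ x, (fderiv ℝ w x (‖x‖⁻¹ • x) * ψ ‖x‖ +
      w x * (dψ ‖x‖ + ((n : ℝ) - 1) / ‖x‖ * ψ ‖x‖)) = 0 := by
    have heq2 : (fun x => fderiv ℝ w x (‖x‖⁻¹ • x) * ψ ‖x‖ +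
        w x * (dψ ‖x‖ + ((n : ℝ) - 1) / ‖x‖ * ψ ‖x‖)) =
        fun x => ∑ i, fderiv ℝ (F i) x (e i) := by
      funext x; rw [hdiv x]
    rw [heq2, integral_finset_sum _ (fun i _ => hF'int i)]
    simp [hIBP]
  rw [integral_add hC1 hC2] at hz
  linarith

noncomputable def Sf (R c : ℝ) : ℝ → ℝ := fun r => 1 - (r/R)^c

lemma Sf_pos {R c : ℝ} (hR : 0 < R) (hc : 0 < c) {r : ℝ} (hr : r ∈ Set.Ioo 0 R) :
    0 < Sf R c r := by
  have h1 : (r/R) < 1 := (div_lt_one hR).2 hr.2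
  have h2 : (0:ℝ) < r/R := div_pos hr.1 hR
  have := Real.rpow_lt_one h2.le h1 hc
  simp only [Sf]
  linarith

lemma hasDerivAt_T {R c : ℝ} (hR : 0 < R) {r : ℝ} (hr : r ∈ Set.Ioo 0 R) :
    HasDerivAt (fun ρ : ℝ => (ρ/R)^c) (c * ((r/R)^c) / r) r := by
  have h1 : HasDerivAt (fun ρ : ℝ => ρ / R) (1/R) r := by
    simpa using (hasDerivAt_id r).div_const R
  have h2 := (Real.hasDerivAt_rpow_const (x := r/R) (p := c)
    (Or.inl (div_pos hr.1 hR).ne')).comp r h1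
  have h3 : HasDerivAt (fun ρ : ℝ => (ρ/R)^c) (c * (r/R)^(c-1) * (1/R)) r := h2
  convert h3 using 1
  rw [Real.rpow_sub (div_pos hr.1 hR), Real.rpow_one]
  field_simp [hR.ne', hr.1.ne']

lemma hasDerivAt_Sf {R c : ℝ} (hR : 0 < R) {r : ℝ} (hr : r ∈ Set.Ioo 0 R) :
    HasDerivAt (Sf R c) (-(c * ((r/R)^c) / r)) r := by
  exact (hasDerivAt_T hR hr (c := c)).const_sub 1

lemma contDiffOn_T {R c : ℝ} (hR : 0 < R) :
    ContDiffOn ℝ (⊤ : ℕ∞) (fun ρ : ℝ => (ρ/R)^c) (Set.Ioo 0 R) := by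
  intro r hr
  exact ((Real.contDiffAt_rpow_const_of_ne (div_pos hr.1 hR).ne').comp r
    (contDiffAt_id.div_const R)).contDiffWithinAt

lemma contDiffOn_Sf {R c : ℝ} (hR : 0 < R) :
    ContDiffOn ℝ (⊤ : ℕ∞) (Sf R c) (Set.Ioo 0 R) :=
  contDiffOn_const.sub (contDiffOn_T hR)

lemma contDiffOn_rpow (b R : ℝ) :
    ContDiffOn ℝ (⊤ : ℕ∞) (fun r : ℝ => r ^ b) (Set.Ioo 0 R) := fun r hr =>
  (Real.contDiffAt_rpow_const_of_ne hr.1.ne').contDiffWithinAt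

lemma hasDerivAt_rpow' {b : ℝ} {r : ℝ} (hr : 0 < r) (b' : ℝ) (hb : b - 1 = b') :
    HasDerivAt (fun ρ : ℝ => ρ ^ b) (b * r ^ b') r := by
  subst hb
  exact Real.hasDerivAt_rpow_const (Or.inl hr.ne')

lemma hasDerivAt_psiA {ν a : ℝ} {r : ℝ} (hr : 0 < r) :
    HasDerivAt (fun ρ : ℝ => (ν-1) * ρ^((3:ℝ)-a))
      ((ν-1) * ((3-a) * r^((2:ℝ)-a))) r := by
  simpa using (hasDerivAt_rpow' (b := (3:ℝ)-a) hr ((2:ℝ)-a) (by ring)).const_mul (ν-1)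

lemma hasDerivAt_psiB {R c a : ℝ} (hR : 0 < R) (hc : 0 < c) {r : ℝ} (hr : r ∈ Set.Ioo 0 R) :
    HasDerivAt (fun ρ : ℝ => (c/2) * (ρ^((3:ℝ)-a) / Sf R c ρ))
      ((c/2) * ((3-a) * r^((2:ℝ)-a) / Sf R c r
        + c * ((r/R)^c) * r^((2:ℝ)-a) / (Sf R c r)^2)) r := by
  have h1 : HasDerivAt (fun ρ : ℝ => ρ^((3:ℝ)-a)) ((3-a) * r^((2:ℝ)-a)) r := by
    simpa using hasDerivAt_rpow' (b := (3:ℝ)-a) hr.1 ((2:ℝ)-a) (by ring)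
  have h2 := hasDerivAt_Sf hR hr (c := c)
  have h3 := (h1.div h2 (Sf_pos hR hc hr).ne').const_mul (c/2)
  refine h3.congr_deriv ?_
  have hx : r^((3:ℝ)-a) = r^((2:ℝ)-a) * r := by
    rw [show (3:ℝ)-a = ((2:ℝ)-a)+1 by ring, Real.rpow_add_one hr.1.ne']
  rw [hx]
  have hS := (Sf_pos hR hc hr).ne'
  field_simp [hr.1.ne', hS]
  ring

lemma hasDerivAt_psiC {R c a : ℝ} (hR : 0 < R) (hc : 0 < c) {r : ℝ} (hr : r ∈ Set.Ioo 0 R) :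
    HasDerivAt (fun ρ : ℝ => (3*c/2) * (ρ^((1:ℝ)-a) / (Sf R c ρ)^3))
      ((3*c/2) * ((1-a) * r^(-a) / (Sf R c r)^3
        + 3 * c * ((r/R)^c) * r^(-a) / (Sf R c r)^4)) r := by
  have h1 : HasDerivAt (fun ρ : ℝ => ρ^((1:ℝ)-a)) ((1-a) * r^(-a)) r := by
    simpa using hasDerivAt_rpow' (b := (1:ℝ)-a) hr.1 (-a) (by ring)
  have h2 : HasDerivAt (fun ρ : ℝ => (Sf R c ρ)^3)
      (3 * (Sf R c r)^2 * (-(c * ((r/R)^c) / r))) r := by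
    exact ((hasDerivAt_Sf hR hr (c := c)).pow 3).congr_deriv (by norm_num)
  have h3 := (h1.div h2 (pow_ne_zero 3 (Sf_pos hR hc hr).ne')).const_mul (3*c/2)
  refine h3.congr_deriv ?_
  have hx : r^((1:ℝ)-a) = r^(-a) * r := by
    rw [show (1:ℝ)-a = (-a)+1 by ring, Real.rpow_add_one hr.1.ne']
  rw [hx]
  have hS := (Sf_pos hR hc hr).ne'
  field_simp [hr.1.ne', hS]
  ring

lemma P1raw {ν a c S q r : ℝ} (hc : 0 < c) (hr : 0 < r) (hq : 0 ≤ q) (hS : 0 < S)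
    (ha3 : 3 ≤ a) (hν : 1 ≤ ν) (hac : a + c ≤ ν + 2) :
    (c^2/4) * (q / S^2) ≤
      (c/2) * ((3-a) * q / S + c * (1-S) * q / S^2) + (ν-1)/r * ((c/2) * (q*r / S))
        - (c^2/4) * (q / S^2) + (ν-1)*(a-3)*q := by
  have hfact : 0 ≤ q / S * ((c/2)*(ν+2-a-c) + (ν-1)*(a-3)*S) := by
    apply mul_nonneg (div_nonneg hq hS.le)
    have h1 : 0 ≤ (c/2)*(ν+2-a-c) := by nlinarith
    nlinarith [mul_nonneg (mul_nonneg (sub_nonneg.2 hν) (sub_nonneg.2 ha3)) hS.le]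
  have heq : (c/2) * ((3-a) * q / S + c * (1-S) * q / S^2) + (ν-1)/r * ((c/2) * (q*r / S))
        - (c^2/4) * (q / S^2) + (ν-1)*(a-3)*q - (c^2/4) * (q / S^2)
      = q / S * ((c/2)*(ν+2-a-c) + (ν-1)*(a-3)*S) := by
    field_simp
    ring
  linarith

lemma P2raw {ν a c S p r : ℝ} (hc : 0 < c) (hr : 0 < r) (hp : 0 ≤ p) (hS : 0 < S)
    (hν : 1 ≤ ν) (hac : a + 3*c ≤ ν) :
    (9*c^2/4) * (p / S^4) ≤
      (3*c/2) * ((1-a) * p / S^3 + 3*c*(1-S) * p / S^4) + (ν-1)/r * ((3*c/2) * (p*r / S^3))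
        - (9*c^2/4) * (p / S^4) := by
  have hfact : 0 ≤ (3*c/2) * (p / S^3) * (ν - a - 3*c) := by
    apply mul_nonneg (mul_nonneg (by positivity) (div_nonneg hp (by positivity)))
    linarith
  have heq : (3*c/2) * ((1-a) * p / S^3 + 3*c*(1-S) * p / S^4) + (ν-1)/r * ((3*c/2) * (p*r / S^3))
        - (9*c^2/4) * (p / S^4) - (9*c^2/4) * (p / S^4)
      = (3*c/2) * (p / S^3) * (ν - a - 3*c) := by
    field_simp
    ring
  linarith

set_option maxHeartbeats 4000000 in
theorem unified_geometric_L2_rellich_inequality {n : ℕ} (hn : 1 ≤ n) {R : ℝ} (hR : 0 < R)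
    {a c : ℝ} (hc : 0 < c) (ha1 : 3 ≤ a)
    (ha2 : a ≤ min ((n : ℝ) - c + 2) ((n : ℝ) - 3 * c))
    (f : EuclideanSpace ℝ (Fin n) → ℂ)
    (hf : ContDiff ℝ (⊤ : ℕ∞) f) (hcomp : HasCompactSupport f)
    (hsupp : tsupport f ⊆ ball (0 : EuclideanSpace ℝ (Fin n)) R \ {0}) :
    (3 * c ^ 2 / 4) ^ 2 *
      (∫ x in ball (0 : EuclideanSpace ℝ (Fin n)) R,
        ‖f x‖ ^ 2 / (‖x‖ ^ a * (1 - (‖x‖ / R) ^ c) ^ 4)) ≤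
    ∫ x in ball (0 : EuclideanSpace ℝ (Fin n)) R,
        ‖radDeriv (radDeriv f) x + ((((n : ℝ) - 1) / ‖x‖ : ℝ) : ℂ) * radDeriv f x‖ ^ 2 /
          ‖x‖ ^ (a - 4) := by
  classical
  have hnu : (1:ℝ) ≤ (n:ℝ) := by exact_mod_cast hn
  have hac1 : a + c ≤ (n:ℝ) + 2 := by
    have := le_trans ha2 (min_le_left ((n : ℝ) - c + 2) ((n : ℝ) - 3 * c)); linarith
  have hac2 : a + 3*c ≤ (n:ℝ) := by
    have := le_trans ha2 (min_le_right ((n : ℝ) - c + 2) ((n : ℝ) - 3 * c)); linarith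
  set K := tsupport f with hKdef
  have hKc : IsClosed K := isClosed_closure
  have hKcm : IsCompact K := hcomp
  have hKU : K ⊆ ball (0 : EuclideanSpace ℝ (Fin n)) R \ {0} := hsupp
  have hUo : IsOpen (ball (0 : EuclideanSpace ℝ (Fin n)) R \ {0}) :=
    isOpen_ball.sdiff isClosed_singleton
  have hmemU : ∀ x : EuclideanSpace ℝ (Fin n), x ∈ ball (0 : EuclideanSpace ℝ (Fin n)) R \ {0} →
      0 < ‖x‖ ∧ ‖x‖ < R := by
    intro x hx
    exact ⟨norm_pos_iff.2 (fun h => hx.2 (by simp [h])), mem_ball_zero_iff.1 hx.1⟩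
  have hrIoo : ∀ x ∈ ball (0 : EuclideanSpace ℝ (Fin n)) R \ {0}, ‖x‖ ∈ Set.Ioo (0:ℝ) R :=
    fun x hx => ⟨(hmemU x hx).1, (hmemU x hx).2⟩
  have hnormne : ∀ x ∈ ball (0 : EuclideanSpace ℝ (Fin n)) R \ {0}, ‖x‖ ≠ (0:ℝ) :=
    fun x hx => (hmemU x hx).1.ne'
  have hf0 : ∀ x ∉ K, f x = 0 := fun x hx => image_eq_zero_of_notMem_tsupport hx
  have hnormOn : ContDiffOn ℝ (⊤ : ℕ∞) (fun x : EuclideanSpace ℝ (Fin n) => ‖x‖)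
      (ball (0 : EuclideanSpace ℝ (Fin n)) R \ {0}) := by
    intro x hx
    have hx0 : x ≠ 0 := fun h => hx.2 (by simp [h])
    exact (contDiffAt_norm (𝕜 := ℝ) hx0).contDiffWithinAt
  have hvsm : ContDiffOn ℝ (⊤ : ℕ∞) (fun x : EuclideanSpace ℝ (Fin n) => ‖x‖⁻¹ • x)
      (ball (0 : EuclideanSpace ℝ (Fin n)) R \ {0}) :=
    (hnormOn.inv hnormne).smul contDiffOn_id
  have hg10 : ∀ x ∉ K, radDeriv f x = 0 := by
    intro x hx
    show fderiv ℝ f x (‖x‖⁻¹ • x) = 0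
    rw [fderiv_zero_of_nmem hKc hx hf0]
    rfl
  have hg1sm : ContDiff ℝ (⊤ : ℕ∞) (radDeriv f) := by
    refine contDiff_glob hUo hKc hKU ?_ hg10
    exact ((hf.fderiv_right (by simp)).contDiffOn).clm_apply hvsm
  have hg20 : ∀ x ∉ K, radDeriv (radDeriv f) x = 0 := by
    intro x hx
    show fderiv ℝ (radDeriv f) x (‖x‖⁻¹ • x) = 0
    rw [fderiv_zero_of_nmem hKc hx hg10]
    rfl
  have hg2sm : ContDiff ℝ (⊤ : ℕ∞) (radDeriv (radDeriv f)) := by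
    refine contDiff_glob hUo hKc hKU ?_ hg20
    exact ((hg1sm.fderiv_right (by simp)).contDiffOn).clm_apply hvsm
  have hw20 : ∀ y ∉ K, (fun y => ‖radDeriv f y‖ ^ 2) y = 0 := fun y hy => by
    simp [hg10 y hy]
  have hw10 : ∀ y ∉ K, (fun y => ‖f y‖ ^ 2) y = 0 := fun y hy => by
    simp [hf0 y hy]
  have hw2sm : ContDiff ℝ (⊤ : ℕ∞) (fun y => ‖radDeriv f y‖ ^ 2) := contDiff_normsq _ hg1sm
  have hw1sm : ContDiff ℝ (⊤ : ℕ∞) (fun y => ‖f y‖ ^ 2) := contDiff_normsq _ hf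
  have hcross2 : ∀ x, fderiv ℝ (fun y => ‖radDeriv f y‖ ^ 2) x (‖x‖⁻¹ • x)
      = 2 * (((starRingEnd ℂ) (radDeriv f x)) * radDeriv (radDeriv f) x).re := fun x =>
    fderiv_normsq_apply _ hg1sm x _
  have hcross1 : ∀ x, fderiv ℝ (fun y => ‖f y‖ ^ 2) x (‖x‖⁻¹ • x)
      = 2 * (((starRingEnd ℂ) (f x)) * radDeriv f x).re := fun x =>
    fderiv_normsq_apply _ hf x _
  have hfd2van : ∀ x ∉ K, fderiv ℝ (fun y => ‖radDeriv f y‖ ^ 2) x = 0 :=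
    fun x hx => fderiv_zero_of_nmem hKc hx hw20
  have hfd1van : ∀ x ∉ K, fderiv ℝ (fun y => ‖f y‖ ^ 2) x = 0 :=
    fun x hx => fderiv_zero_of_nmem hKc hx hw10
  -- integrability helper
  have hint : ∀ F : EuclideanSpace ℝ (Fin n) → ℝ,
      ContinuousOn F (ball (0 : EuclideanSpace ℝ (Fin n)) R \ {0}) →
      (∀ x ∉ K, F x = 0) → Integrable F :=
    fun F hFc hF0 => integrable_glob hKcm (continuous_glob hUo hKc hKU hFc hF0) hF0
  -- continuity building blocks
  have hSfc : ContinuousOn (Sf R c) (Set.Ioo 0 R) := (contDiffOn_Sf hR).continuousOn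
  have hSne : ∀ r ∈ Set.Ioo (0:ℝ) R, Sf R c r ≠ 0 := fun r hr => (Sf_pos hR hc hr).ne'
  have hS2ne : ∀ r ∈ Set.Ioo (0:ℝ) R, (Sf R c r)^2 ≠ 0 := fun r hr => pow_ne_zero 2 (hSne r hr)
  have hS3ne : ∀ r ∈ Set.Ioo (0:ℝ) R, (Sf R c r)^3 ≠ 0 := fun r hr => pow_ne_zero 3 (hSne r hr)
  have hS4ne : ∀ r ∈ Set.Ioo (0:ℝ) R, (Sf R c r)^4 ≠ 0 := fun r hr => pow_ne_zero 4 (hSne r hr)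
  have hTc : ContinuousOn (fun r : ℝ => (r/R)^c) (Set.Ioo 0 R) := (contDiffOn_T hR).continuousOn
  have hrpc : ∀ b : ℝ, ContinuousOn (fun r : ℝ => r ^ b) (Set.Ioo 0 R) :=
    fun b => (contDiffOn_rpow b R).continuousOn
  have hvC : ContinuousOn (fun x : EuclideanSpace ℝ (Fin n) => ‖x‖⁻¹ • x)
      (ball (0 : EuclideanSpace ℝ (Fin n)) R \ {0}) :=
    ((continuous_norm.continuousOn).inv₀ hnormne).smul continuous_id.continuousOn
  have hnormC : ContinuousOn (fun x : EuclideanSpace ℝ (Fin n) => ‖x‖)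
      (ball (0 : EuclideanSpace ℝ (Fin n)) R \ {0}) := continuous_norm.continuousOn
  have hradC : ∀ {φ : ℝ → ℝ}, ContinuousOn φ (Set.Ioo 0 R) →
      ContinuousOn (fun x : EuclideanSpace ℝ (Fin n) => φ ‖x‖)
        (ball (0 : EuclideanSpace ℝ (Fin n)) R \ {0}) :=
    fun hφ => hφ.comp hnormC hrIoo
  have hg1C : Continuous (radDeriv f) := hg1sm.continuous
  have hg2C : Continuous (radDeriv (radDeriv f)) := hg2sm.continuous
  have hfd2C : Continuous (fderiv ℝ (fun y => ‖radDeriv f y‖ ^ 2)) :=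
    hw2sm.continuous_fderiv (by simp)
  have hfd1C : Continuous (fderiv ℝ (fun y => ‖f y‖ ^ 2)) :=
    hw1sm.continuous_fderiv (by simp)
  -- the integrable functions
  have intIb : Integrable (fun x : EuclideanSpace ℝ (Fin n) =>
      ‖radDeriv (radDeriv f) x‖ ^ 2 * ‖x‖ ^ ((4:ℝ)-a)) := by
    refine hint _ (ContinuousOn.mul ?_ (hradC (hrpc _))) (fun x hx => by simp [hg20 x hx])
    exact ((hg2C.norm).pow 2).continuousOn
  have intIg : Integrable (fun x : EuclideanSpace ℝ (Fin n) =>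
      ‖radDeriv f x‖ ^ 2 * ‖x‖ ^ ((2:ℝ)-a)) := by
    refine hint _ (ContinuousOn.mul ?_ (hradC (hrpc _))) (fun x hx => by simp [hg10 x hx])
    exact ((hg1C.norm).pow 2).continuousOn
  have intBf : Integrable (fun x : EuclideanSpace ℝ (Fin n) =>
      ‖radDeriv f x‖ ^ 2 * (‖x‖ ^ ((2:ℝ)-a) / (Sf R c ‖x‖)^2)) := by
    refine hint _ (ContinuousOn.mul ?_ (hradC ((hrpc _).div (hSfc.pow 2) hS2ne)))
      (fun x hx => by simp [hg10 x hx])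
    exact ((hg1C.norm).pow 2).continuousOn
  have intDf : Integrable (fun x : EuclideanSpace ℝ (Fin n) =>
      ‖f x‖ ^ 2 * (‖x‖ ^ (-a) / (Sf R c ‖x‖)^4)) := by
    refine hint _ (ContinuousOn.mul ?_ (hradC ((hrpc _).div (hSfc.pow 4) hS4ne)))
      (fun x hx => by simp [hf0 x hx])
    exact ((hf.continuous.norm).pow 2).continuousOn
  have intcrA : Integrable (fun x : EuclideanSpace ℝ (Fin n) =>
      fderiv ℝ (fun y => ‖radDeriv f y‖ ^ 2) x (‖x‖⁻¹ • x)
        * (((n:ℝ)-1) * ‖x‖ ^ ((3:ℝ)-a))) := by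
    refine hint _ (ContinuousOn.mul (hfd2C.continuousOn.clm_apply hvC)
      (hradC (continuousOn_const.mul (hrpc _))))
      (fun x hx => by rw [hfd2van x hx]; simp)
  have intcrB : Integrable (fun x : EuclideanSpace ℝ (Fin n) =>
      fderiv ℝ (fun y => ‖radDeriv f y‖ ^ 2) x (‖x‖⁻¹ • x)
        * ((c/2) * (‖x‖ ^ ((3:ℝ)-a) / Sf R c ‖x‖))) := by
    refine hint _ (ContinuousOn.mul (hfd2C.continuousOn.clm_apply hvC)
      (hradC (continuousOn_const.mul ((hrpc _).div hSfc hSne))))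
      (fun x hx => by rw [hfd2van x hx]; simp)
  have intcrD : Integrable (fun x : EuclideanSpace ℝ (Fin n) =>
      fderiv ℝ (fun y => ‖f y‖ ^ 2) x (‖x‖⁻¹ • x)
        * ((3*c/2) * (‖x‖ ^ ((1:ℝ)-a) / (Sf R c ‖x‖)^3))) := by
    refine hint _ (ContinuousOn.mul (hfd1C.continuousOn.clm_apply hvC)
      (hradC (continuousOn_const.mul ((hrpc _).div (hSfc.pow 3) hS3ne))))
      (fun x hx => by rw [hfd1van x hx]; simp)
  have intXA : Integrable (fun x : EuclideanSpace ℝ (Fin n) =>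
      ‖radDeriv f x‖ ^ 2 * ((((n:ℝ)-1) * ((3-a) * ‖x‖ ^ ((2:ℝ)-a)))
        + ((n:ℝ)-1)/‖x‖ * (((n:ℝ)-1) * ‖x‖ ^ ((3:ℝ)-a)))) := by
    refine hint _ (ContinuousOn.mul ((hg1C.norm.pow 2).continuousOn) (ContinuousOn.add
      (hradC (continuousOn_const.mul (continuousOn_const.mul (hrpc _))))
      ((continuousOn_const.div hnormC hnormne).mul
        (hradC (continuousOn_const.mul (hrpc _))))))
      (fun x hx => by simp [hg10 x hx])
  have intXB : Integrable (fun x : EuclideanSpace ℝ (Fin n) =>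
      ‖radDeriv f x‖ ^ 2 * ((c/2) * ((3-a) * ‖x‖ ^ ((2:ℝ)-a) / Sf R c ‖x‖
          + c * ((‖x‖/R)^c) * ‖x‖ ^ ((2:ℝ)-a) / (Sf R c ‖x‖)^2)
        + ((n:ℝ)-1)/‖x‖ * ((c/2) * (‖x‖ ^ ((3:ℝ)-a) / Sf R c ‖x‖)))) := by
    refine hint _ (ContinuousOn.mul ((hg1C.norm.pow 2).continuousOn) (ContinuousOn.add
      (hradC (continuousOn_const.mul (ContinuousOn.add
        ((continuousOn_const.mul (hrpc _)).div hSfc hSne)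
        (((continuousOn_const.mul hTc).mul (hrpc _)).div (hSfc.pow 2) hS2ne))))
      ((continuousOn_const.div hnormC hnormne).mul
        (hradC (continuousOn_const.mul ((hrpc _).div hSfc hSne))))))
      (fun x hx => by simp [hg10 x hx])
  have intXD : Integrable (fun x : EuclideanSpace ℝ (Fin n) =>
      ‖f x‖ ^ 2 * ((3*c/2) * ((1-a) * ‖x‖ ^ (-a) / (Sf R c ‖x‖)^3
          + 3 * c * ((‖x‖/R)^c) * ‖x‖ ^ (-a) / (Sf R c ‖x‖)^4)
        + ((n:ℝ)-1)/‖x‖ * ((3*c/2) * (‖x‖ ^ ((1:ℝ)-a) / (Sf R c ‖x‖)^3)))) := by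
    refine hint _ (ContinuousOn.mul ((hf.continuous.norm.pow 2).continuousOn) (ContinuousOn.add
      (hradC (continuousOn_const.mul (ContinuousOn.add
        ((continuousOn_const.mul (hrpc _)).div (hSfc.pow 3) hS3ne)
        (((continuousOn_const.mul hTc).mul (hrpc _)).div (hSfc.pow 4) hS4ne))))
      ((continuousOn_const.div hnormC hnormne).mul
        (hradC (continuousOn_const.mul ((hrpc _).div (hSfc.pow 3) hS3ne))))))
      (fun x hx => by simp [hf0 x hx])
  -- key integration-by-parts identities
  have keyA := radial_ibp hR hKcm hKc hKU hw2sm hw20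
    (ψ := fun r => ((n:ℝ)-1) * r^((3:ℝ)-a))
    (dψ := fun r => ((n:ℝ)-1) * ((3-a) * r^((2:ℝ)-a)))
    (fun r hr => hasDerivAt_psiA hr.1)
    (contDiffOn_const.mul (contDiffOn_rpow _ R))
    (continuousOn_const.mul (continuousOn_const.mul (hrpc _)))
  have keyB := radial_ibp hR hKcm hKc hKU hw2sm hw20
    (ψ := fun r => (c/2) * (r^((3:ℝ)-a) / Sf R c r))
    (dψ := fun r => (c/2) * ((3-a) * r^((2:ℝ)-a) / Sf R c r
      + c * ((r/R)^c) * r^((2:ℝ)-a) / (Sf R c r)^2))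
    (fun r hr => hasDerivAt_psiB hR hc hr)
    (contDiffOn_const.mul ((contDiffOn_rpow _ R).div (contDiffOn_Sf hR) hSne))
    (continuousOn_const.mul (ContinuousOn.add
      ((continuousOn_const.mul (hrpc _)).div hSfc hSne)
      (((continuousOn_const.mul hTc).mul (hrpc _)).div (hSfc.pow 2) hS2ne)))
  have keyD := radial_ibp hR hKcm hKc hKU hw1sm hw10
    (ψ := fun r => (3*c/2) * (r^((1:ℝ)-a) / (Sf R c r)^3))
    (dψ := fun r => (3*c/2) * ((1-a) * r^(-a) / (Sf R c r)^3
      + 3 * c * ((r/R)^c) * r^(-a) / (Sf R c r)^4))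
    (fun r hr => hasDerivAt_psiC hR hc hr)
    (contDiffOn_const.mul ((contDiffOn_rpow _ R).div ((contDiffOn_Sf hR).pow 3) hS3ne))
    (continuousOn_const.mul (ContinuousOn.add
      ((continuousOn_const.mul (hrpc _)).div (hSfc.pow 3) hS3ne)
      (((continuousOn_const.mul hTc).mul (hrpc _)).div (hSfc.pow 4) hS4ne)))
  -- pointwise expansion for step A
  have hExpA : ∀ x : EuclideanSpace ℝ (Fin n),
      ‖radDeriv (radDeriv f) x + ((((n:ℝ)-1)/‖x‖ : ℝ) : ℂ) * radDeriv f x‖ ^ 2 * ‖x‖ ^ ((4:ℝ)-a)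
      = ‖radDeriv (radDeriv f) x‖ ^ 2 * ‖x‖ ^ ((4:ℝ)-a)
        + fderiv ℝ (fun y => ‖radDeriv f y‖ ^ 2) x (‖x‖⁻¹ • x) * (((n:ℝ)-1) * ‖x‖ ^ ((3:ℝ)-a))
        + (((n:ℝ)-1)^2) * (‖radDeriv f x‖ ^ 2 * ‖x‖ ^ ((2:ℝ)-a)) := by
    intro x
    by_cases hx : x ∈ ball (0 : EuclideanSpace ℝ (Fin n)) R \ {0}
    · have hr0 : 0 < ‖x‖ := (hmemU x hx).1
      rw [expand_sq, hcross2 x]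
      have hq3 : ‖x‖^((3:ℝ)-a) = ‖x‖^((2:ℝ)-a) * ‖x‖ := by
        rw [show (3:ℝ)-a = ((2:ℝ)-a)+1 by ring, Real.rpow_add_one hr0.ne']
      have hq4 : ‖x‖^((4:ℝ)-a) = ‖x‖^((2:ℝ)-a) * ‖x‖ * ‖x‖ := by
        rw [show (4:ℝ)-a = (((2:ℝ)-a)+1)+1 by ring, Real.rpow_add_one hr0.ne',
          Real.rpow_add_one hr0.ne']
      rw [hq3, hq4]
      field_simp
    · have hxK : x ∉ K := fun h => hx (hKU h)
      rw [hg10 x hxK, hg20 x hxK, hfd2van x hxK]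
      simp
  -- pointwise expansion for step B
  have hExpB : ∀ x : EuclideanSpace ℝ (Fin n),
      ‖radDeriv (radDeriv f) x + (((c/2)/(‖x‖ * Sf R c ‖x‖) : ℝ) : ℂ) * radDeriv f x‖ ^ 2
          * ‖x‖ ^ ((4:ℝ)-a)
      = ‖radDeriv (radDeriv f) x‖ ^ 2 * ‖x‖ ^ ((4:ℝ)-a)
        + fderiv ℝ (fun y => ‖radDeriv f y‖ ^ 2) x (‖x‖⁻¹ • x)
            * ((c/2) * (‖x‖ ^ ((3:ℝ)-a) / Sf R c ‖x‖))
        + (c^2/4) * (‖radDeriv f x‖ ^ 2 * (‖x‖ ^ ((2:ℝ)-a) / (Sf R c ‖x‖)^2)) := by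
    intro x
    by_cases hx : x ∈ ball (0 : EuclideanSpace ℝ (Fin n)) R \ {0}
    · have hr0 : 0 < ‖x‖ := (hmemU x hx).1
      have hSx : Sf R c ‖x‖ ≠ 0 := hSne _ (hrIoo x hx)
      rw [expand_sq, hcross2 x]
      have hq3 : ‖x‖^((3:ℝ)-a) = ‖x‖^((2:ℝ)-a) * ‖x‖ := by
        rw [show (3:ℝ)-a = ((2:ℝ)-a)+1 by ring, Real.rpow_add_one hr0.ne']
      have hq4 : ‖x‖^((4:ℝ)-a) = ‖x‖^((2:ℝ)-a) * ‖x‖ * ‖x‖ := by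
        rw [show (4:ℝ)-a = (((2:ℝ)-a)+1)+1 by ring, Real.rpow_add_one hr0.ne',
          Real.rpow_add_one hr0.ne']
      rw [hq3, hq4]
      field_simp
      ring
    · have hxK : x ∉ K := fun h => hx (hKU h)
      rw [hg10 x hxK, hg20 x hxK, hfd2van x hxK]
      simp
  -- pointwise expansion for step D
  have hExpD : ∀ x : EuclideanSpace ℝ (Fin n),
      ‖radDeriv f x + (((3*c/2)/(‖x‖ * Sf R c ‖x‖) : ℝ) : ℂ) * f x‖ ^ 2
          * (‖x‖ ^ ((2:ℝ)-a) / (Sf R c ‖x‖)^2)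
      = ‖radDeriv f x‖ ^ 2 * (‖x‖ ^ ((2:ℝ)-a) / (Sf R c ‖x‖)^2)
        + fderiv ℝ (fun y => ‖f y‖ ^ 2) x (‖x‖⁻¹ • x)
            * ((3*c/2) * (‖x‖ ^ ((1:ℝ)-a) / (Sf R c ‖x‖)^3))
        + (9*c^2/4) * (‖f x‖ ^ 2 * (‖x‖ ^ (-a) / (Sf R c ‖x‖)^4)) := by
    intro x
    by_cases hx : x ∈ ball (0 : EuclideanSpace ℝ (Fin n)) R \ {0}
    · have hr0 : 0 < ‖x‖ := (hmemU x hx).1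
      have hSx : Sf R c ‖x‖ ≠ 0 := hSne _ (hrIoo x hx)
      rw [expand_sq, hcross1 x]
      have hq1 : ‖x‖^((1:ℝ)-a) = ‖x‖^(-a) * ‖x‖ := by
        rw [show (1:ℝ)-a = (-a)+1 by ring, Real.rpow_add_one hr0.ne']
      have hq2 : ‖x‖^((2:ℝ)-a) = ‖x‖^(-a) * ‖x‖ * ‖x‖ := by
        rw [show (2:ℝ)-a = ((-a)+1)+1 by ring, Real.rpow_add_one hr0.ne',
          Real.rpow_add_one hr0.ne']
      rw [hq1, hq2]
      field_simp
      ring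
    · have hxK : x ∉ K := fun h => hx (hKU h)
      rw [hg10 x hxK, hf0 x hxK, hfd1van x hxK]
      simp
  -- pointwise identity for step A radial term
  have hA2 : ∀ x : EuclideanSpace ℝ (Fin n),
      ‖radDeriv f x‖ ^ 2 * ((((n:ℝ)-1) * ((3-a) * ‖x‖ ^ ((2:ℝ)-a)))
        + ((n:ℝ)-1)/‖x‖ * (((n:ℝ)-1) * ‖x‖ ^ ((3:ℝ)-a)))
      = (((n:ℝ)-1)*(3-a) + ((n:ℝ)-1)^2) * (‖radDeriv f x‖ ^ 2 * ‖x‖ ^ ((2:ℝ)-a)) := by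
    intro x
    by_cases hx : x ∈ ball (0 : EuclideanSpace ℝ (Fin n)) R \ {0}
    · have hr0 : 0 < ‖x‖ := (hmemU x hx).1
      have hq3 : ‖x‖^((3:ℝ)-a) = ‖x‖^((2:ℝ)-a) * ‖x‖ := by
        rw [show (3:ℝ)-a = ((2:ℝ)-a)+1 by ring, Real.rpow_add_one hr0.ne']
      rw [hq3]
      field_simp
    · have hxK : x ∉ K := fun h => hx (hKU h)
      rw [hg10 x hxK]
      simp
  -- step A: integral identity
  have eIA : (∫ x, ‖radDeriv (radDeriv f) x + ((((n:ℝ)-1)/‖x‖ : ℝ) : ℂ) * radDeriv f x‖ ^ 2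
        * ‖x‖ ^ ((4:ℝ)-a))
      = (∫ x, ‖radDeriv (radDeriv f) x‖ ^ 2 * ‖x‖ ^ ((4:ℝ)-a))
        + (((n:ℝ)-1)*(a-3)) * (∫ x, ‖radDeriv f x‖ ^ 2 * ‖x‖ ^ ((2:ℝ)-a)) := by
    have h1 : (∫ x, ‖radDeriv (radDeriv f) x + ((((n:ℝ)-1)/‖x‖ : ℝ) : ℂ) * radDeriv f x‖ ^ 2
        * ‖x‖ ^ ((4:ℝ)-a))
        = (∫ x, ‖radDeriv (radDeriv f) x‖ ^ 2 * ‖x‖ ^ ((4:ℝ)-a))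
          + (∫ x, fderiv ℝ (fun y => ‖radDeriv f y‖ ^ 2) x (‖x‖⁻¹ • x)
              * (((n:ℝ)-1) * ‖x‖ ^ ((3:ℝ)-a)))
          + (((n:ℝ)-1)^2) * (∫ x, ‖radDeriv f x‖ ^ 2 * ‖x‖ ^ ((2:ℝ)-a)) := by
      simp only [hExpA]
      have intAB : Integrable (fun x : EuclideanSpace ℝ (Fin n) =>
          ‖radDeriv (radDeriv f) x‖ ^ 2 * ‖x‖ ^ ((4:ℝ)-a)
          + fderiv ℝ (fun y => ‖radDeriv f y‖ ^ 2) x (‖x‖⁻¹ • x)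
              * (((n:ℝ)-1) * ‖x‖ ^ ((3:ℝ)-a))) := intIb.add intcrA
      rw [integral_add intAB (intIg.const_mul (((n:ℝ)-1)^2)),
        integral_add intIb intcrA, integral_const_mul]
    have h2 : (∫ x, ‖radDeriv f x‖ ^ 2
        * ((((n:ℝ)-1) * ((3-a) * ‖x‖ ^ ((2:ℝ)-a)))
          + ((n:ℝ)-1)/‖x‖ * (((n:ℝ)-1) * ‖x‖ ^ ((3:ℝ)-a))))
        = (((n:ℝ)-1)*(3-a) + ((n:ℝ)-1)^2)
          * (∫ x, ‖radDeriv f x‖ ^ 2 * ‖x‖ ^ ((2:ℝ)-a)) := by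
      simp only [hA2]
      rw [integral_const_mul]
    rw [h1, keyA, h2]
    ring
  -- step B: completing the square
  have hPB : (0:ℝ) ≤ ∫ x, ‖radDeriv (radDeriv f) x
      + (((c/2)/(‖x‖ * Sf R c ‖x‖) : ℝ) : ℂ) * radDeriv f x‖ ^ 2 * ‖x‖ ^ ((4:ℝ)-a) := by
    apply integral_nonneg
    intro x
    have h1 : (0:ℝ) ≤ ‖x‖ ^ ((4:ℝ)-a) := Real.rpow_nonneg (norm_nonneg x) _
    positivity
  have ePB : (∫ x, ‖radDeriv (radDeriv f) x
        + (((c/2)/(‖x‖ * Sf R c ‖x‖) : ℝ) : ℂ) * radDeriv f x‖ ^ 2 * ‖x‖ ^ ((4:ℝ)-a))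
      = (∫ x, ‖radDeriv (radDeriv f) x‖ ^ 2 * ‖x‖ ^ ((4:ℝ)-a))
        + (∫ x, fderiv ℝ (fun y => ‖radDeriv f y‖ ^ 2) x (‖x‖⁻¹ • x)
            * ((c/2) * (‖x‖ ^ ((3:ℝ)-a) / Sf R c ‖x‖)))
        + (c^2/4) * (∫ x, ‖radDeriv f x‖ ^ 2 * (‖x‖ ^ ((2:ℝ)-a) / (Sf R c ‖x‖)^2)) := by
    simp only [hExpB]
    have intAB : Integrable (fun x : EuclideanSpace ℝ (Fin n) =>
        ‖radDeriv (radDeriv f) x‖ ^ 2 * ‖x‖ ^ ((4:ℝ)-a)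
        + fderiv ℝ (fun y => ‖radDeriv f y‖ ^ 2) x (‖x‖⁻¹ • x)
            * ((c/2) * (‖x‖ ^ ((3:ℝ)-a) / Sf R c ‖x‖))) := intIb.add intcrB
    rw [integral_add intAB (intBf.const_mul (c^2/4)),
      integral_add intIb intcrB, integral_const_mul]
  -- step D: completing the square
  have hPD : (0:ℝ) ≤ ∫ x, ‖radDeriv f x
      + (((3*c/2)/(‖x‖ * Sf R c ‖x‖) : ℝ) : ℂ) * f x‖ ^ 2
        * (‖x‖ ^ ((2:ℝ)-a) / (Sf R c ‖x‖)^2) := by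
    apply integral_nonneg
    intro x
    have h1 : (0:ℝ) ≤ ‖x‖ ^ ((2:ℝ)-a) := Real.rpow_nonneg (norm_nonneg x) _
    positivity
  have ePD : (∫ x, ‖radDeriv f x
        + (((3*c/2)/(‖x‖ * Sf R c ‖x‖) : ℝ) : ℂ) * f x‖ ^ 2
          * (‖x‖ ^ ((2:ℝ)-a) / (Sf R c ‖x‖)^2))
      = (∫ x, ‖radDeriv f x‖ ^ 2 * (‖x‖ ^ ((2:ℝ)-a) / (Sf R c ‖x‖)^2))
        + (∫ x, fderiv ℝ (fun y => ‖f y‖ ^ 2) x (‖x‖⁻¹ • x)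
            * ((3*c/2) * (‖x‖ ^ ((1:ℝ)-a) / (Sf R c ‖x‖)^3)))
        + (9*c^2/4) * (∫ x, ‖f x‖ ^ 2 * (‖x‖ ^ (-a) / (Sf R c ‖x‖)^4)) := by
    simp only [hExpD]
    have intAB : Integrable (fun x : EuclideanSpace ℝ (Fin n) =>
        ‖radDeriv f x‖ ^ 2 * (‖x‖ ^ ((2:ℝ)-a) / (Sf R c ‖x‖)^2)
        + fderiv ℝ (fun y => ‖f y‖ ^ 2) x (‖x‖⁻¹ • x)
            * ((3*c/2) * (‖x‖ ^ ((1:ℝ)-a) / (Sf R c ‖x‖)^3))) := intBf.add intcrD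
    rw [integral_add intAB (intDf.const_mul (9*c^2/4)),
      integral_add intBf intcrD, integral_const_mul]
  -- step C: pointwise comparison (Hardy weight 1)
  have hMonoC : ∀ x : EuclideanSpace ℝ (Fin n),
      (c^2/4) * (‖radDeriv f x‖ ^ 2 * (‖x‖ ^ ((2:ℝ)-a) / (Sf R c ‖x‖)^2))
      ≤ ‖radDeriv f x‖ ^ 2 * ((c/2) * ((3-a) * ‖x‖ ^ ((2:ℝ)-a) / Sf R c ‖x‖
            + c * ((‖x‖/R)^c) * ‖x‖ ^ ((2:ℝ)-a) / (Sf R c ‖x‖)^2)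
          + ((n:ℝ)-1)/‖x‖ * ((c/2) * (‖x‖ ^ ((3:ℝ)-a) / Sf R c ‖x‖)))
        - (c^2/4) * (‖radDeriv f x‖ ^ 2 * (‖x‖ ^ ((2:ℝ)-a) / (Sf R c ‖x‖)^2))
        + (((n:ℝ)-1)*(a-3)) * (‖radDeriv f x‖ ^ 2 * ‖x‖ ^ ((2:ℝ)-a)) := by
    intro x
    by_cases hx : x ∈ ball (0 : EuclideanSpace ℝ (Fin n)) R \ {0}
    · have hr0 : 0 < ‖x‖ := (hmemU x hx).1
      have hSx : 0 < Sf R c ‖x‖ := Sf_pos hR hc (hrIoo x hx)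
      have hq3 : ‖x‖^((3:ℝ)-a) = ‖x‖^((2:ℝ)-a) * ‖x‖ := by
        rw [show (3:ℝ)-a = ((2:ℝ)-a)+1 by ring, Real.rpow_add_one hr0.ne']
      have h := P1raw (ν := (n:ℝ)) (a := a) (c := c) (S := Sf R c ‖x‖)
        (q := ‖x‖ ^ ((2:ℝ)-a)) (r := ‖x‖) hc hr0 (Real.rpow_nonneg (norm_nonneg x) _)
        hSx ha1 hnu hac1
      have h2 := mul_le_mul_of_nonneg_left h (by positivity : (0:ℝ) ≤ ‖radDeriv f x‖ ^ 2)
      refine le_trans (le_of_eq ?_) (le_trans h2 (le_of_eq ?_))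
      · ring
      · rw [hq3]
        have hTS : (1 - Sf R c ‖x‖) = (‖x‖/R)^c := by simp [Sf]
        rw [hTS]
        ring
    · have hxK : x ∉ K := fun h => hx (hKU h)
      rw [hg10 x hxK]
      simp
  -- step C': pointwise comparison (Hardy weight 2)
  have hMonoD : ∀ x : EuclideanSpace ℝ (Fin n),
      (9*c^2/4) * (‖f x‖ ^ 2 * (‖x‖ ^ (-a) / (Sf R c ‖x‖)^4))
      ≤ ‖f x‖ ^ 2 * ((3*c/2) * ((1-a) * ‖x‖ ^ (-a) / (Sf R c ‖x‖)^3
            + 3 * c * ((‖x‖/R)^c) * ‖x‖ ^ (-a) / (Sf R c ‖x‖)^4)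
          + ((n:ℝ)-1)/‖x‖ * ((3*c/2) * (‖x‖ ^ ((1:ℝ)-a) / (Sf R c ‖x‖)^3)))
        - (9*c^2/4) * (‖f x‖ ^ 2 * (‖x‖ ^ (-a) / (Sf R c ‖x‖)^4)) := by
    intro x
    by_cases hx : x ∈ ball (0 : EuclideanSpace ℝ (Fin n)) R \ {0}
    · have hr0 : 0 < ‖x‖ := (hmemU x hx).1
      have hSx : 0 < Sf R c ‖x‖ := Sf_pos hR hc (hrIoo x hx)
      have hq1 : ‖x‖^((1:ℝ)-a) = ‖x‖^(-a) * ‖x‖ := by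
        rw [show (1:ℝ)-a = (-a)+1 by ring, Real.rpow_add_one hr0.ne']
      have h := P2raw (ν := (n:ℝ)) (a := a) (c := c) (S := Sf R c ‖x‖)
        (p := ‖x‖ ^ (-a)) (r := ‖x‖) hc hr0 (Real.rpow_nonneg (norm_nonneg x) _)
        hSx hnu hac2
      have h2 := mul_le_mul_of_nonneg_left h (by positivity : (0:ℝ) ≤ ‖f x‖ ^ 2)
      refine le_trans (le_of_eq ?_) (le_trans h2 (le_of_eq ?_))
      · ring
      · rw [hq1]
        have hTS : (1 - Sf R c ‖x‖) = (‖x‖/R)^c := by simp [Sf]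
        rw [hTS]
        ring
    · have hxK : x ∉ K := fun h => hx (hKU h)
      rw [hf0 x hxK]
      simp
  -- integral mono steps
  have hCint : (c^2/4) * (∫ x, ‖radDeriv f x‖ ^ 2 * (‖x‖ ^ ((2:ℝ)-a) / (Sf R c ‖x‖)^2))
      ≤ (∫ x, ‖radDeriv f x‖ ^ 2 * ((c/2) * ((3-a) * ‖x‖ ^ ((2:ℝ)-a) / Sf R c ‖x‖
            + c * ((‖x‖/R)^c) * ‖x‖ ^ ((2:ℝ)-a) / (Sf R c ‖x‖)^2)
          + ((n:ℝ)-1)/‖x‖ * ((c/2) * (‖x‖ ^ ((3:ℝ)-a) / Sf R c ‖x‖))))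
        - (c^2/4) * (∫ x, ‖radDeriv f x‖ ^ 2 * (‖x‖ ^ ((2:ℝ)-a) / (Sf R c ‖x‖)^2))
        + (((n:ℝ)-1)*(a-3)) * (∫ x, ‖radDeriv f x‖ ^ 2 * ‖x‖ ^ ((2:ℝ)-a)) := by
    have intXmB : Integrable (fun x : EuclideanSpace ℝ (Fin n) =>
        ‖radDeriv f x‖ ^ 2 * ((c/2) * ((3-a) * ‖x‖ ^ ((2:ℝ)-a) / Sf R c ‖x‖
            + c * ((‖x‖/R)^c) * ‖x‖ ^ ((2:ℝ)-a) / (Sf R c ‖x‖)^2)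
          + ((n:ℝ)-1)/‖x‖ * ((c/2) * (‖x‖ ^ ((3:ℝ)-a) / Sf R c ‖x‖)))
        - (c^2/4) * (‖radDeriv f x‖ ^ 2 * (‖x‖ ^ ((2:ℝ)-a) / (Sf R c ‖x‖)^2))) :=
      intXB.sub (intBf.const_mul (c^2/4))
    have intRHS : Integrable (fun x : EuclideanSpace ℝ (Fin n) =>
        (‖radDeriv f x‖ ^ 2 * ((c/2) * ((3-a) * ‖x‖ ^ ((2:ℝ)-a) / Sf R c ‖x‖
            + c * ((‖x‖/R)^c) * ‖x‖ ^ ((2:ℝ)-a) / (Sf R c ‖x‖)^2)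
          + ((n:ℝ)-1)/‖x‖ * ((c/2) * (‖x‖ ^ ((3:ℝ)-a) / Sf R c ‖x‖)))
        - (c^2/4) * (‖radDeriv f x‖ ^ 2 * (‖x‖ ^ ((2:ℝ)-a) / (Sf R c ‖x‖)^2)))
        + (((n:ℝ)-1)*(a-3)) * (‖radDeriv f x‖ ^ 2 * ‖x‖ ^ ((2:ℝ)-a))) :=
      intXmB.add (intIg.const_mul (((n:ℝ)-1)*(a-3)))
    have hm := integral_mono (intBf.const_mul (c^2/4)) intRHS hMonoC
    rw [integral_const_mul, integral_add intXmB (intIg.const_mul (((n:ℝ)-1)*(a-3))),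
      integral_sub intXB (intBf.const_mul (c^2/4)), integral_const_mul,
      integral_const_mul] at hm
    exact hm
  have hDint : (9*c^2/4) * (∫ x, ‖f x‖ ^ 2 * (‖x‖ ^ (-a) / (Sf R c ‖x‖)^4))
      ≤ (∫ x, ‖f x‖ ^ 2 * ((3*c/2) * ((1-a) * ‖x‖ ^ (-a) / (Sf R c ‖x‖)^3
            + 3 * c * ((‖x‖/R)^c) * ‖x‖ ^ (-a) / (Sf R c ‖x‖)^4)
          + ((n:ℝ)-1)/‖x‖ * ((3*c/2) * (‖x‖ ^ ((1:ℝ)-a) / (Sf R c ‖x‖)^3))))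
        - (9*c^2/4) * (∫ x, ‖f x‖ ^ 2 * (‖x‖ ^ (-a) / (Sf R c ‖x‖)^4)) := by
    have intXmD : Integrable (fun x : EuclideanSpace ℝ (Fin n) =>
        ‖f x‖ ^ 2 * ((3*c/2) * ((1-a) * ‖x‖ ^ (-a) / (Sf R c ‖x‖)^3
            + 3 * c * ((‖x‖/R)^c) * ‖x‖ ^ (-a) / (Sf R c ‖x‖)^4)
          + ((n:ℝ)-1)/‖x‖ * ((3*c/2) * (‖x‖ ^ ((1:ℝ)-a) / (Sf R c ‖x‖)^3)))
        - (9*c^2/4) * (‖f x‖ ^ 2 * (‖x‖ ^ (-a) / (Sf R c ‖x‖)^4))) :=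
      intXD.sub (intDf.const_mul (9*c^2/4))
    have hm := integral_mono (intDf.const_mul (9*c^2/4)) intXmD hMonoD
    rw [integral_const_mul, integral_sub intXD (intDf.const_mul (9*c^2/4)),
      integral_const_mul] at hm
    exact hm
  -- conversions of the two sides of the goal
  have hLHS : (∫ x in ball (0 : EuclideanSpace ℝ (Fin n)) R,
        ‖f x‖ ^ 2 / (‖x‖ ^ a * (1 - (‖x‖ / R) ^ c) ^ 4))
      = ∫ x, ‖f x‖ ^ 2 * (‖x‖ ^ (-a) / (Sf R c ‖x‖)^4) := by
    have hvan : ∀ x ∉ ball (0 : EuclideanSpace ℝ (Fin n)) R,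
        ‖f x‖ ^ 2 / (‖x‖ ^ a * (1 - (‖x‖ / R) ^ c) ^ 4) = 0 := by
      intro x hx
      have hxK : x ∉ K := fun h => hx (hKU h).1
      simp [hf0 x hxK]
    rw [setIntegral_eq_integral_of_forall_compl_eq_zero hvan]
    refine integral_congr_ae (Filter.Eventually.of_forall fun x => ?_)
    simp only []
    by_cases hx : x ∈ ball (0 : EuclideanSpace ℝ (Fin n)) R \ {0}
    · have hr0 : 0 < ‖x‖ := (hmemU x hx).1
      have hSx : 0 < Sf R c ‖x‖ := Sf_pos hR hc (hrIoo x hx)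
      have hra : (0:ℝ) < ‖x‖ ^ a := Real.rpow_pos_of_pos hr0 a
      simp only [Sf] at hSx ⊢
      rw [Real.rpow_neg (norm_nonneg x)]
      field_simp
    · have hxK : x ∉ K := fun h => hx (hKU h)
      simp [hf0 x hxK]
  have hRHS : (∫ x in ball (0 : EuclideanSpace ℝ (Fin n)) R,
        ‖radDeriv (radDeriv f) x + ((((n : ℝ) - 1) / ‖x‖ : ℝ) : ℂ) * radDeriv f x‖ ^ 2 /
          ‖x‖ ^ (a - 4))
      = ∫ x, ‖radDeriv (radDeriv f) x + ((((n:ℝ)-1)/‖x‖ : ℝ) : ℂ) * radDeriv f x‖ ^ 2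
          * ‖x‖ ^ ((4:ℝ)-a) := by
    have hvan : ∀ x ∉ ball (0 : EuclideanSpace ℝ (Fin n)) R,
        ‖radDeriv (radDeriv f) x + ((((n : ℝ) - 1) / ‖x‖ : ℝ) : ℂ) * radDeriv f x‖ ^ 2 /
          ‖x‖ ^ (a - 4) = 0 := by
      intro x hx
      have hxK : x ∉ K := fun h => hx (hKU h).1
      rw [hg10 x hxK, hg20 x hxK]
      simp
    rw [setIntegral_eq_integral_of_forall_compl_eq_zero hvan]
    refine integral_congr_ae (Filter.Eventually.of_forall fun x => ?_)
    simp only []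
    by_cases hx : x ∈ ball (0 : EuclideanSpace ℝ (Fin n)) R \ {0}
    · have hr0 : 0 < ‖x‖ := (hmemU x hx).1
      have h4 : ‖x‖ ^ ((4:ℝ)-a) = (‖x‖ ^ (a-4))⁻¹ := by
        rw [show (4:ℝ)-a = -(a-4) by ring, Real.rpow_neg (norm_nonneg x)]
      rw [h4, div_eq_mul_inv]
    · have hxK : x ∉ K := fun h => hx (hKU h)
      rw [hg10 x hxK, hg20 x hxK]
      simp
  rw [hLHS, hRHS]
  -- final assembly
  have hBge : (∫ x, ‖radDeriv f x‖ ^ 2 * ((c/2) * ((3-a) * ‖x‖ ^ ((2:ℝ)-a) / Sf R c ‖x‖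
          + c * ((‖x‖/R)^c) * ‖x‖ ^ ((2:ℝ)-a) / (Sf R c ‖x‖)^2)
        + ((n:ℝ)-1)/‖x‖ * ((c/2) * (‖x‖ ^ ((3:ℝ)-a) / Sf R c ‖x‖))))
      - (c^2/4) * (∫ x, ‖radDeriv f x‖ ^ 2 * (‖x‖ ^ ((2:ℝ)-a) / (Sf R c ‖x‖)^2))
      ≤ ∫ x, ‖radDeriv (radDeriv f) x‖ ^ 2 * ‖x‖ ^ ((4:ℝ)-a) := by
    rw [ePB] at hPB
    rw [keyB] at hPB
    linarith
  have hDge : (∫ x, ‖f x‖ ^ 2 * ((3*c/2) * ((1-a) * ‖x‖ ^ (-a) / (Sf R c ‖x‖)^3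
          + 3 * c * ((‖x‖/R)^c) * ‖x‖ ^ (-a) / (Sf R c ‖x‖)^4)
        + ((n:ℝ)-1)/‖x‖ * ((3*c/2) * (‖x‖ ^ ((1:ℝ)-a) / (Sf R c ‖x‖)^3))))
      - (9*c^2/4) * (∫ x, ‖f x‖ ^ 2 * (‖x‖ ^ (-a) / (Sf R c ‖x‖)^4))
      ≤ ∫ x, ‖radDeriv f x‖ ^ 2 * (‖x‖ ^ ((2:ℝ)-a) / (Sf R c ‖x‖)^2) := by
    rw [ePD] at hPD
    rw [keyD] at hPD
    linarith
  have hfinal2 : (9*c^2/4) * (∫ x, ‖f x‖ ^ 2 * (‖x‖ ^ (-a) / (Sf R c ‖x‖)^4))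
      ≤ ∫ x, ‖radDeriv f x‖ ^ 2 * (‖x‖ ^ ((2:ℝ)-a) / (Sf R c ‖x‖)^2) := by
    linarith
  have hfinal1 : (c^2/4) * (∫ x, ‖radDeriv f x‖ ^ 2 * (‖x‖ ^ ((2:ℝ)-a) / (Sf R c ‖x‖)^2))
      ≤ ∫ x, ‖radDeriv (radDeriv f) x + ((((n:ℝ)-1)/‖x‖ : ℝ) : ℂ) * radDeriv f x‖ ^ 2
        * ‖x‖ ^ ((4:ℝ)-a) := by
    rw [eIA]
    linarith
  calc (3 * c ^ 2 / 4) ^ 2 * (∫ x, ‖f x‖ ^ 2 * (‖x‖ ^ (-a) / (Sf R c ‖x‖)^4))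
      = (c^2/4) * ((9*c^2/4) * (∫ x, ‖f x‖ ^ 2 * (‖x‖ ^ (-a) / (Sf R c ‖x‖)^4))) := by ring
    _ ≤ (c^2/4) * (∫ x, ‖radDeriv f x‖ ^ 2 * (‖x‖ ^ ((2:ℝ)-a) / (Sf R c ‖x‖)^2)) := by
        apply mul_le_mul_of_nonneg_left hfinal2 (by positivity)
    _ ≤ _ := hfinal1
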